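/- arXiv:2510.03867 — 4 statements merged into one kernel-verified Lean document; each statement's English description precedes it below -/
import Mathlib

section
/- Let X be an n×n real symmetric positive definite matrix and D a diagonal matrix with strictly positive diagonal entries satisfying 0 ≺ D ≺ 2 X^{-1} (i.e., D and 2X^{-1} - D are positive definite). Then every eigenvalue of I - X D has absolute value strictly less than 1, i.e., the spectral radius of I - X D is strictly less than 1. -/
/-!
If `(1 - X D) v = μ v` with `v ≠ 0`, then `λ = 1 - μ` satisfies `D v = λ X⁻¹ v`. Whenever a positive
definite `A` satisfies `A v = c X⁻¹ v`, the scalar `c = v* A v / v* X⁻¹ v` is a quotient of two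
positive reals. Taking `A = D` gives `0 < λ`, and taking `A = 2 X⁻¹ - D` gives `0 < 2 - λ`; hence
`μ = 1 - λ` is real with `|μ| < 1`.
-/

open Matrix ComplexOrder

theorem Complex.re_star_dotProduct_map_ofReal_mulVec {n : Type*} [Fintype n]
    (M : Matrix n n ℝ) (x : n → ℂ) :
    (star x ⬝ᵥ (M.map Complex.ofReal *ᵥ x)).re
      = (re ∘ x) ⬝ᵥ (M *ᵥ (re ∘ x)) + (im ∘ x) ⬝ᵥ (M *ᵥ (im ∘ x)) := by
  simp only [dotProduct, mulVec, map_apply, Pi.star_apply, Function.comp_apply, re_sum,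
    Finset.mul_sum, ← Finset.sum_add_distrib, mul_re, star_def, conj_re, conj_im, ofReal_re,
    ofReal_im]
  refine Finset.sum_congr rfl fun i _ => Finset.sum_congr rfl fun j _ => ?_
  simp only [mul_im, ofReal_re, ofReal_im]
  ring

theorem Matrix.PosDef.map_ofReal {n : Type*} [Fintype n] {M : Matrix n n ℝ} (hM : M.PosDef) :
    (M.map Complex.ofReal).PosDef := by
  have hH : (M.map Complex.ofReal).IsHermitian :=
    hM.1.map _ fun r => (Complex.conj_ofReal r).symm
  refine .of_dotProduct_mulVec_pos hH fun x hx =>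
    Complex.pos_iff.mpr ⟨?_, (hH.im_star_dotProduct_mulVec_self x).symm⟩
  have hpos {y : n → ℝ} (hy : y ≠ 0) : 0 < y ⬝ᵥ (M *ᵥ y) := by
    simpa using hM.dotProduct_mulVec_pos hy
  have hnonneg (y : n → ℝ) : 0 ≤ y ⬝ᵥ (M *ᵥ y) := by
    simpa using hM.posSemidef.dotProduct_mulVec_nonneg y
  rw [Complex.re_star_dotProduct_map_ofReal_mulVec]
  by_cases hre : Complex.re ∘ x = 0
  · have him : Complex.im ∘ x ≠ 0 := fun him =>
      hx (funext fun i => Complex.ext (congrFun hre i) (congrFun him i))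
    exact add_pos_of_nonneg_of_pos (hnonneg _) (hpos him)
  · exact add_pos_of_pos_of_nonneg (hpos hre) (hnonneg _)

theorem Matrix.exists_mulVec_eq_smul_of_mem_spectrum {K n : Type*} [Field K] [Fintype n]
    [DecidableEq n] {A : Matrix n n K} {μ : K} (h : μ ∈ spectrum K A) :
    ∃ v ≠ 0, A *ᵥ v = μ • v := by
  rw [← spectrum_toLin', ← Module.End.hasEigenvalue_iff_mem_spectrum] at h
  obtain ⟨v, hv⟩ := h.exists_hasEigenvector
  exact ⟨v, hv.2, by simpa using hv.apply_eq_smul⟩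

theorem Matrix.PosDef.pos_of_mulVec_eq_smul_mulVec {𝕜 n : Type*} [RCLike 𝕜] [Fintype n]
    {A B : Matrix n n 𝕜} (hA : A.PosDef) (hB : B.PosDef) {v : n → 𝕜} (hv : v ≠ 0) {c : 𝕜}
    (h : A *ᵥ v = c • (B *ᵥ v)) : 0 < c := by
  have hAv := hA.dotProduct_mulVec_pos hv
  have hBv := hB.dotProduct_mulVec_pos hv
  rw [h, dotProduct_smul, smul_eq_mul] at hAv
  simpa [hBv.ne'] using div_pos hAv hBv

theorem Complex.norm_one_sub_lt_one {z : ℂ} (h₀ : 0 < z) (h₂ : 0 < 2 - z) : ‖1 - z‖ < 1 := by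
  obtain ⟨hre, him⟩ := Complex.pos_iff.mp h₀
  have hre₂ : z.re < 2 := by simpa using (Complex.pos_iff.mp h₂).1
  rw [← (Complex.abs_re_eq_norm).mpr (by simp [← him]), abs_lt]
  constructor <;> simp <;> linarith

theorem stmt2_general {n : ℕ} (X : Matrix (Fin n) (Fin n) ℝ) (hX : X.PosDef)
    (D : Matrix (Fin n) (Fin n) ℝ) (hDpos : D.PosDef)
    (hDlt : ((2 : ℝ) • X⁻¹ - D).PosDef) :
    ∀ μ ∈ spectrum ℂ ((1 - X * D).map Complex.ofReal), ‖μ‖ < 1 := by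
  intro μ hμ
  let φ : Matrix (Fin n) (Fin n) ℝ →ₐ[ℝ] Matrix (Fin n) (Fin n) ℂ := (Algebra.ofId ℝ ℂ).mapMatrix
  obtain ⟨v, hv0, hv⟩ := exists_mulVec_eq_smul_of_mem_spectrum (A := φ (1 - X * D)) hμ
  have hXDv : φ X *ᵥ (φ D *ᵥ v) = (1 - μ) • v := by
    rw [map_sub, map_one, map_mul, sub_mulVec, one_mulVec, ← mulVec_mulVec] at hv
    rw [sub_smul, one_smul, ← hv, sub_sub_cancel]
  have hXinv : X⁻¹ * X = 1 := nonsing_inv_mul X (isUnit_iff_ne_zero.mpr hX.det_pos.ne')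
  have hDv : φ D *ᵥ v = (1 - μ) • (φ X⁻¹ *ᵥ v) := by
    rw [← mulVec_smul, ← hXDv, mulVec_mulVec, ← map_mul, hXinv, map_one, one_mulVec]
  have hpos : 0 < 1 - μ :=
    hDpos.map_ofReal.pos_of_mulVec_eq_smul_mulVec hX.inv.map_ofReal hv0 hDv
  have hlt : 0 < 2 - (1 - μ) := by
    refine hDlt.map_ofReal.pos_of_mulVec_eq_smul_mulVec hX.inv.map_ofReal hv0 ?_
    change φ (2 • X⁻¹ - D) *ᵥ v = (2 - (1 - μ)) • (φ X⁻¹ *ᵥ v)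
    rw [map_sub, map_smul, sub_mulVec, smul_mulVec, hDv]
    module
  simpa using Complex.norm_one_sub_lt_one hpos hlt

/-- If `X` is symmetric positive definite and `D = diag(d)` with `d > 0`
satisfies `0 ≺ D ≺ 2 X⁻¹`, then every (complex) eigenvalue of `I - X D` has absolute
value strictly less than 1, i.e. the spectral radius of `I - X D` is `< 1`. -/
theorem stmt2 {n : ℕ} (X : Matrix (Fin n) (Fin n) ℝ) (hX : X.PosDef)
    (d : Fin n → ℝ) (D : Matrix (Fin n) (Fin n) ℝ) (hD : D = Matrix.diagonal d)
    (hDpos : D.PosDef)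
    (hDlt : ((2 : ℝ) • X⁻¹ - D).PosDef) :
    ∀ μ ∈ spectrum ℂ ((1 - X * D).map Complex.ofReal), ‖μ‖ < 1 :=
  stmt2_general X hX D hDpos hDlt
end

section
/- Suppose R = ρ X for some positive real ρ, where X is an n×n real symmetric positive definite matrix, and K^p, K^q are diagonal matrices such that ρ K^p + K^q is a diagonal matrix with strictly positive entries satisfying ρ K^p + K^q ≺ 2 X^{-1}. Then the closed-loop matrix A = I - R K^p - X K^q has spectral radius strictly less than 1, and hence the system v_t = A v_{t-1} satisfies v_t → 0 as t → ∞ for every initial condition v_0. -/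
open Matrix Filter Topology

/-!
With `D = ρ Kᵖ + Kᵠ`, the hypothesis `R = ρ X` turns `A` into `1 - X D`.
If `(1 - X D) v = μ v` with `v ≠ 0`, then `D v = (1 - μ) X⁻¹ v`, so
`1 - μ = v* D v / v* X⁻¹ v` is a real number in `(0, 2)` because `0 ≺ D ≺ 2 X⁻¹`;
hence `|μ| < 1`. By Gelfand's formula `‖Aᵗ‖ ≤ cᵗ` for some `c < 1` and all large `t`,
so every trajectory `v t = Aᵗ v 0` tends to zero.
-/

open scoped ComplexOrder in
lemma Complex.norm_lt_one_of_eq_one_sub_mul {a b μ : ℂ} (ha : 0 < a) (hab : a < 2 * b)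
    (h : a = (1 - μ) * b) : ‖μ‖ < 1 := by
  have hb : 0 < b := by
    have := Complex.pos_iff.mp (ha.trans hab)
    exact Complex.pos_iff.mpr (by simpa [eq_comm] using this)
  obtain ⟨r, rfl⟩ : ∃ r : ℝ, a = r :=
    ⟨a.re, eq_re_of_ofReal_le (r := 0) (by simpa using ha.le)⟩
  obtain ⟨s, rfl⟩ : ∃ s : ℝ, b = s :=
    ⟨b.re, eq_re_of_ofReal_le (r := 0) (by simpa using hb.le)⟩
  norm_cast at ha hb hab
  have hμ : μ = ((1 - r / s : ℝ) : ℂ) := by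
    push_cast
    field_simp
    linear_combination h
  have h0 : 0 < r / s := div_pos ha hb
  have h2 : r / s < 2 := (div_lt_iff₀ hb).mpr hab
  rw [hμ, norm_real, Real.norm_eq_abs, abs_lt]
  constructor <;> linarith

theorem spectrum.tendsto_pow_atTop_nhds_zero_of_forall_norm_lt_one {A : Type*} [NormedRing A]
    [NormedAlgebra ℂ A] [CompleteSpace A] {a : A} (ha : ∀ μ ∈ spectrum ℂ a, ‖μ‖ < 1) :
    Tendsto (fun t : ℕ => a ^ t) atTop (𝓝 0) := by
  have hr : spectralRadius ℂ a < 1 := by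
    rcases (spectrum ℂ a).eq_empty_or_nonempty with h | h
    · simp [spectralRadius, h]
    · exact_mod_cast spectrum.spectralRadius_lt_of_forall_lt_of_nonempty h
        (r := 1) fun μ hμ => by exact_mod_cast ha μ hμ
  obtain ⟨c, hrc, hc1⟩ := ENNReal.lt_iff_exists_nnreal_btwn.mp hr
  have hbound : ∀ᶠ t : ℕ in atTop, ‖a ^ t‖ ≤ (c : ℝ) ^ t := by
    filter_upwards [(pow_nnnorm_pow_one_div_tendsto_nhds_spectralRadius a).eventually_lt_const
      hrc, eventually_gt_atTop 0] with t ht htpos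
    rw [one_div, ← ENNReal.coe_rpow_of_nonneg _ (by positivity), ENNReal.coe_lt_coe,
      NNReal.rpow_inv_lt_iff (by positivity), NNReal.rpow_natCast] at ht
    exact_mod_cast ht.le
  exact squeeze_zero_norm' hbound
    (tendsto_pow_atTop_nhds_zero_of_lt_one c.coe_nonneg (by exact_mod_cast hc1))

namespace Matrix

variable {n : Type*} [Fintype n]

lemma star_dotProduct_map_ofReal_mulVec {M : Matrix n n ℝ} (hM : M.IsSymm) (v : n → ℂ) :
    star v ⬝ᵥ (M.map Complex.ofReal *ᵥ v) =
      ((Complex.re ∘ v) ⬝ᵥ (M *ᵥ (Complex.re ∘ v)) +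
        (Complex.im ∘ v) ⬝ᵥ (M *ᵥ (Complex.im ∘ v)) : ℝ) := by
  apply Complex.ext
  · simp [dotProduct, mulVec, Complex.re_sum, Finset.mul_sum, Finset.sum_add_distrib]
  · simp only [dotProduct, Pi.star_apply, RCLike.star_def, mulVec, map_apply, Finset.mul_sum,
      Complex.im_sum, Complex.mul_im, Complex.conj_re, Complex.ofReal_re, Complex.ofReal_im,
      zero_mul, add_zero, Complex.conj_im, Complex.mul_re, sub_zero, neg_mul,
      Finset.sum_add_distrib, Finset.sum_neg_distrib, Function.comp_apply, Complex.ofReal_add,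
      Complex.ofReal_sum, Complex.ofReal_mul, Complex.add_im, mul_zero, Finset.sum_const_zero]
    rw [add_neg_eq_zero, Finset.sum_comm]
    refine Finset.sum_congr rfl fun i _ => Finset.sum_congr rfl fun j _ => ?_
    rw [hM.apply i j]
    ring

open scoped ComplexOrder in
lemma PosDef.map_ofReal_s4 {M : Matrix n n ℝ} (hM : M.PosDef) :
    (M.map Complex.ofReal).PosDef := by
  refine .of_dotProduct_mulVec_pos (hM.isHermitian.map _ fun _ => by simp) fun v hv => ?_
  rw [star_dotProduct_map_ofReal_mulVec (isHermitian_iff_isSymm.mp hM.isHermitian),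
    Complex.zero_lt_real]
  have hv' : Complex.re ∘ v ≠ 0 ∨ Complex.im ∘ v ≠ 0 := by
    by_contra! h
    exact hv (funext fun i => Complex.ext (congrFun h.1 i) (congrFun h.2 i))
  rcases hv' with h | h
  · exact add_pos_of_pos_of_nonneg (hM.dotProduct_mulVec_pos h)
      (hM.posSemidef.dotProduct_mulVec_nonneg _)
  · exact add_pos_of_nonneg_of_pos (hM.posSemidef.dotProduct_mulVec_nonneg _)
      (hM.dotProduct_mulVec_pos h)

variable [DecidableEq n]

lemma map_nonsing_inv {K L : Type*} [Field K] [Field L] (f : K →+* L) (M : Matrix n n K) :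
    M⁻¹.map f = (M.map f)⁻¹ := by
  have hdet := f.map_det M
  have hadj := f.map_adjugate M
  simp only [RingHom.mapMatrix_apply] at hdet hadj
  rw [inv_def, inv_def, ← hdet, ← hadj, Ring.inverse_eq_inv', Ring.inverse_eq_inv',
    ← map_inv₀]
  ext i j
  simp

lemma exists_mulVec_eq_smul_of_mem_spectrum_s4 {K : Type*} [Field K] {M : Matrix n n K} {μ : K}
    (hμ : μ ∈ spectrum K M) : ∃ v ≠ 0, M *ᵥ v = μ • v := by
  rw [← spectrum_toLin', ← Module.End.hasEigenvalue_iff_mem_spectrum] at hμ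
  obtain ⟨v, hv⟩ := hμ.exists_hasEigenvector
  exact ⟨v, hv.2, by simpa using hv.apply_eq_smul⟩

open scoped ComplexOrder in
lemma norm_lt_one_of_mem_spectrum_one_sub_mul {X D : Matrix n n ℂ} (hX : IsUnit X)
    (hD : D.PosDef) (hXD : ((2 : ℝ) • X⁻¹ - D).PosDef) {μ : ℂ}
    (hμ : μ ∈ spectrum ℂ (1 - X * D)) : ‖μ‖ < 1 := by
  obtain ⟨v, hv, hμv⟩ := exists_mulVec_eq_smul_of_mem_spectrum_s4 hμ
  have hXDv : X *ᵥ (D *ᵥ v) = (1 - μ) • v := by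
    rw [mulVec_mulVec, sub_smul, one_smul, ← hμv, sub_mulVec, one_mulVec, sub_sub_cancel]
  have hDv : D *ᵥ v = (1 - μ) • (X⁻¹ *ᵥ v) := by
    rw [← mulVec_smul, ← hXDv, mulVec_mulVec,
      nonsing_inv_mul _ ((isUnit_iff_isUnit_det X).mp hX), one_mulVec]
  refine Complex.norm_lt_one_of_eq_one_sub_mul (hD.dotProduct_mulVec_pos hv) ?_
    (by rw [hDv, dotProduct_smul, smul_eq_mul])
  simpa [sub_mulVec, smul_mulVec, dotProduct_sub, sub_pos] using hXD.dotProduct_mulVec_pos hv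

lemma tendsto_nhds_zero_of_forall_succ_eq_mulVec {R : Type*} [Semiring R] [TopologicalSpace R]
    [ContinuousAdd R] [ContinuousMul R] {A : Matrix n n R}
    (hA : Tendsto (fun t : ℕ => A ^ t) atTop (𝓝 0))
    {v : ℕ → n → R} (hv : ∀ t, v (t + 1) = A *ᵥ v t) : Tendsto v atTop (𝓝 0) := by
  have hpow : ∀ t, v t = A ^ t *ᵥ v 0 := by
    intro t
    induction t with
    | zero => simp
    | succ t ih => rw [hv, ih, mulVec_mulVec, pow_succ']
  have hcont : Continuous fun M : Matrix n n R => M *ᵥ v 0 :=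
    continuous_id.matrix_mulVec continuous_const
  rw [funext hpow, ← zero_mulVec (v 0)]
  exact (hcont.tendsto 0).comp hA

section

-- Any norm inducing the usual topology would do; this one makes `Matrix n n ℂ` a Banach algebra.
attribute [local instance] Matrix.linftyOpNormedRing Matrix.linftyOpNormedAlgebra

lemma tendsto_pow_atTop_nhds_zero_of_spectrum_map_ofReal {A : Matrix n n ℝ}
    (hA : ∀ μ ∈ spectrum ℂ (A.map Complex.ofReal), ‖μ‖ < 1) :
    Tendsto (fun t : ℕ => A ^ t) atTop (𝓝 0) := by
  have hre : Continuous fun M : Matrix n n ℂ => M.map Complex.re :=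
    continuous_id.matrix_map Complex.continuous_re
  have hpow : ∀ t : ℕ, (A.map Complex.ofReal ^ t).map Complex.re = A ^ t := fun t => by
    change (Complex.ofRealHom.mapMatrix A ^ t).map Complex.re = A ^ t
    rw [← map_pow, RingHom.mapMatrix_apply, map_map]
    rfl
  rw [← funext hpow, ← Matrix.map_zero _ Complex.zero_re]
  exact (hre.tendsto 0).comp (spectrum.tendsto_pow_atTop_nhds_zero_of_forall_norm_lt_one hA)

end

end Matrix

theorem stmt4_general {n : ℕ} (ρ : ℝ)
    (X R : Matrix (Fin n) (Fin n) ℝ) (hX : X.PosDef) (hR : R = ρ • X)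
    (kp kq : Fin n → ℝ)
    (hpos : ∀ i, 0 < ρ * kp i + kq i)
    (hlt : ((2 : ℝ) • X⁻¹ - Matrix.diagonal (fun i => ρ * kp i + kq i)).PosDef)
    (A : Matrix (Fin n) (Fin n) ℝ)
    (hA : A = 1 - R * Matrix.diagonal kp - X * Matrix.diagonal kq) :
    (∀ μ ∈ spectrum ℂ (A.map Complex.ofReal), ‖μ‖ < 1) ∧
      (∀ v : ℕ → (Fin n → ℝ), (∀ t : ℕ, v (t + 1) = A *ᵥ v t) →
        Tendsto v atTop (nhds 0)) := by
  set D := diagonal fun i => ρ * kp i + kq i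
  have hAXD : A = 1 - X * D := by
    rw [hA, hR, sub_sub, smul_mul_assoc, ← mul_smul_comm, ← mul_add, ← diagonal_smul,
      diagonal_add]
    rfl
  have hmapA : A.map Complex.ofReal = 1 - X.map Complex.ofReal * D.map Complex.ofReal := by
    rw [hAXD]
    change Complex.ofRealAm.mapMatrix (1 - X * D) =
      1 - Complex.ofRealAm.mapMatrix X * Complex.ofRealAm.mapMatrix D
    rw [map_sub, map_one, map_mul]
  have hmapXD : ((2 : ℝ) • X⁻¹ - D).map Complex.ofReal =
      (2 : ℝ) • (X.map Complex.ofReal)⁻¹ - D.map Complex.ofReal := by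
    change Complex.ofRealAm.mapMatrix ((2 : ℝ) • X⁻¹ - D) =
      (2 : ℝ) • (Complex.ofRealHom.mapMatrix X)⁻¹ - Complex.ofRealAm.mapMatrix D
    rw [map_sub, map_smul, RingHom.mapMatrix_apply, ← map_nonsing_inv]
    rfl
  have hspec : ∀ μ ∈ spectrum ℂ (A.map Complex.ofReal), ‖μ‖ < 1 := fun μ hμ =>
    norm_lt_one_of_mem_spectrum_one_sub_mul (hX.isUnit.map Complex.ofRealHom.mapMatrix)
      (posDef_diagonal_iff.mpr hpos).map_ofReal_s4 (hmapXD ▸ hlt.map_ofReal_s4) (hmapA ▸ hμ)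
  exact ⟨hspec, fun v hv => tendsto_nhds_zero_of_forall_succ_eq_mulVec
    (tendsto_pow_atTop_nhds_zero_of_spectrum_map_ofReal hspec) hv⟩

/-- Theorem 2 of the paper. If `R = ρ X` with `X` symmetric positive
definite, `Kᵖ, Kᵠ` diagonal with `ρ Kᵖ + Kᵠ` having strictly positive entries and
`ρ Kᵖ + Kᵠ ≺ 2 X⁻¹`, then `A = I - R Kᵖ - X Kᵠ` has spectral radius `< 1`, and every
trajectory of `v_t = A v_{t-1}` converges to zero. -/
theorem stmt4 {n : ℕ} (ρ : ℝ) (hρ : 0 < ρ)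
    (X R : Matrix (Fin n) (Fin n) ℝ) (hX : X.PosDef) (hR : R = ρ • X)
    (kp kq : Fin n → ℝ)
    (hpos : ∀ i, 0 < ρ * kp i + kq i)
    (hlt : ((2 : ℝ) • X⁻¹ - Matrix.diagonal (fun i => ρ * kp i + kq i)).PosDef)
    (A : Matrix (Fin n) (Fin n) ℝ)
    (hA : A = 1 - R * Matrix.diagonal kp - X * Matrix.diagonal kq) :
    (∀ μ ∈ spectrum ℂ (A.map Complex.ofReal), ‖μ‖ < 1) ∧
      (∀ v : ℕ → (Fin n → ℝ), (∀ t : ℕ, v (t + 1) = A *ᵥ v t) →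
        Tendsto v atTop (nhds 0)) :=
  stmt4_general ρ X R hX hR kp kq hpos hlt A hA
end

section
/- Let X be an n×n real symmetric positive definite matrix and let K be a diagonal matrix whose entries k_i satisfy 0 < k_i < 2 / λ_max(X) for all i, where λ_max(X) is the largest eigenvalue of X. Then the spectral radius of I - X K is strictly less than 1. -/
/-! With `S = diag (√k)`, the matrix `X K = (X S) S` has the same characteristic polynomial as the
symmetric matrix `M = S X S`. In the Loewner order `0 < M ≤ λ_max S² = λ_max K < 2`, so the
eigenvalues of `M` lie in `(0, 2)`, and those of `I - X K`, being `1` minus them, lie in `(-1, 1)`. -/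

open Matrix
open scoped MatrixOrder ComplexOrder

namespace Matrix

variable {n : Type*} [Fintype n]

theorem map_ofReal_mul (A B : Matrix n n ℝ) :
    (A * B).map Complex.ofReal = A.map Complex.ofReal * B.map Complex.ofReal :=
  Matrix.map_mul (f := Complex.ofRealHom)

variable [DecidableEq n]

theorem spectrum_mul_comm {K : Type*} [Field K] (A B : Matrix n n K) :
    spectrum K (A * B) = spectrum K (B * A) := by
  ext μ
  rw [mem_spectrum_iff_isRoot_charpoly, mem_spectrum_iff_isRoot_charpoly, charpoly_mul_comm]

theorem IsHermitian.spectrum_map_ofReal {A : Matrix n n ℝ} (hA : A.IsHermitian) :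
    spectrum ℂ (A.map Complex.ofReal) = Complex.ofReal '' spectrum ℝ A := by
  ext μ
  rw [mem_spectrum_iff_isRoot_charpoly, show A.map Complex.ofReal = A.map Complex.ofRealHom from rfl,
    charpoly_map, hA.charpoly_eq, hA.spectrum_real_eq_range_eigenvalues]
  simp [Polynomial.IsRoot, Polynomial.map_prod, Polynomial.eval_prod, Finset.prod_eq_zero_iff,
    sub_eq_zero, eq_comm (a := μ)]

theorem IsHermitian.le_algebraMap_iSup_eigenvalues {𝕜 : Type*} [RCLike 𝕜] {A : Matrix n n 𝕜}
    (hA : A.IsHermitian) : A ≤ algebraMap ℝ (Matrix n n 𝕜) (⨆ i, hA.eigenvalues i) := by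
  refine le_algebraMap_of_spectrum_le (fun x hx => ?_) hA.isSelfAdjoint
  obtain ⟨i, rfl⟩ := hA.spectrum_real_eq_range_eigenvalues ▸ hx
  exact le_ciSup (Set.finite_range _).bddAbove i

theorem PosDef.spectrum_subset_Ioi {𝕜 : Type*} [RCLike 𝕜] {A : Matrix n n 𝕜} (hA : A.PosDef) :
    spectrum ℝ A ⊆ Set.Ioi 0 := by
  rw [hA.isHermitian.spectrum_real_eq_range_eigenvalues]
  rintro _ ⟨i, rfl⟩
  exact hA.eigenvalues_pos i

theorem spectrum_subset_Iio_of_posDef_algebraMap_sub {𝕜 : Type*} [RCLike 𝕜] {A : Matrix n n 𝕜}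
    {b : ℝ} (hA : (algebraMap ℝ (Matrix n n 𝕜) b - A).PosDef) : spectrum ℝ A ⊆ Set.Iio b := by
  intro x hx
  have : b - x ∈ spectrum ℝ (algebraMap ℝ (Matrix n n 𝕜) b - A) :=
    spectrum.singleton_sub_eq A b ▸ Set.sub_mem_sub rfl hx
  simpa using hA.spectrum_subset_Ioi this

theorem posDef_algebraMap_sub_diagonal_mul_mul_diagonal {X : Matrix n n ℝ} {c b : ℝ}
    (hX : X ≤ algebraMap ℝ (Matrix n n ℝ) c) {s : n → ℝ} (hs : ∀ i, c * s i ^ 2 < b) :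
    (algebraMap ℝ (Matrix n n ℝ) b - diagonal s * X * diagonal s).PosDef := by
  have hle : diagonal s * X * diagonal s ≤ diagonal fun i => c * s i ^ 2 := by
    convert star_left_conjugate_le_conjugate hX (diagonal s) using 1
    · simp [star_eq_conjTranspose]
    · simp [star_eq_conjTranspose, algebraMap_eq_diagonal]
      exact fun i => by ring
  have hsplit : algebraMap ℝ (Matrix n n ℝ) b - diagonal s * X * diagonal s
      = diagonal (fun i => b - c * s i ^ 2)
        + (diagonal (fun i => c * s i ^ 2) - diagonal s * X * diagonal s) := by
    rw [← add_sub_assoc, diagonal_add]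
    simp [algebraMap_eq_diagonal]
  rw [hsplit]
  exact (posDef_diagonal_iff.mpr fun i => sub_pos.mpr (hs i)).add_posSemidef hle

end Matrix

/-- If `X` is symmetric positive definite with largest eigenvalue
`λ_max(X)`, and `K = diag(k)` with `0 < k i < 2 / λ_max(X)` for all `i`, then the
spectral radius of `I - X K` is strictly less than 1. -/
theorem stmt9 {n : ℕ} (X : Matrix (Fin n) (Fin n) ℝ) (hX : X.PosDef)
    (k : Fin n → ℝ)
    (hk : ∀ i, 0 < k i ∧ k i < 2 / (⨆ j, hX.1.eigenvalues j)) :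
    ∀ μ ∈ spectrum ℂ ((1 - X * Matrix.diagonal k).map Complex.ofReal), ‖μ‖ < 1 := by
  intro μ hμ
  set S := diagonal fun i => √(k i)
  have hS : Function.Injective S.mulVec :=
    mulVec_injective_iff_isUnit.mpr <| isUnit_diagonal.mpr <|
      Pi.isUnit_iff.mpr fun i => (Real.sqrt_pos.mpr (hk i).1).ne'.isUnit
  have hM_pos : (S * X * S).PosDef := by
    simpa [S, diagonal_conjTranspose] using hX.conjTranspose_mul_mul_same hS
  have hM_lt_two : (algebraMap ℝ _ 2 - S * X * S).PosDef := by
    refine posDef_algebraMap_sub_diagonal_mul_mul_diagonal hX.1.le_algebraMap_iSup_eigenvalues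
      fun i => ?_
    obtain ⟨hk_pos, hk_lt⟩ := hk i
    have hlam_pos := (div_pos_iff_of_pos_left two_pos).mp (hk_pos.trans hk_lt)
    rw [Real.sq_sqrt hk_pos.le, mul_comm]
    exact (lt_div_iff₀ hlam_pos).mp hk_lt
  have hK : diagonal k = S * S := by
    simp [S, diagonal_mul_diagonal, Real.mul_self_sqrt (hk _).1.le]
  have hA : (1 - X * diagonal k).map Complex.ofReal
      = algebraMap ℂ _ 1 - (X * S).map Complex.ofReal * S.map Complex.ofReal := by
    simp [hK, Matrix.map_sub, ← Matrix.mul_assoc, map_ofReal_mul]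
  rw [hA, ← spectrum.singleton_sub_eq, Set.mem_sub] at hμ
  obtain ⟨_, rfl, ν, hν, rfl⟩ := hμ
  rw [spectrum_mul_comm, ← map_ofReal_mul, ← Matrix.mul_assoc,
    hM_pos.isHermitian.spectrum_map_ofReal] at hν
  obtain ⟨r, hr, rfl⟩ := hν
  have hr_pos : 0 < r := hM_pos.spectrum_subset_Ioi hr
  have hr_lt_two : r < 2 := spectrum_subset_Iio_of_posDef_algebraMap_sub hM_lt_two hr
  rw [← Complex.ofReal_one, ← Complex.ofReal_sub, Complex.norm_real, Real.norm_eq_abs,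
    abs_sub_lt_iff]
  constructor <;> linarith
end

section
/- Let X be an n×n real symmetric positive definite matrix and D₁, D₂ diagonal matrices with 0 ≺ D₁ ⪯ D₂ ≺ 2X^{-1} entrywise (i.e., 0 < (D₁)_{ii} ≤ (D₂)_{ii} and D₂ ≺ 2X^{-1}). Then both I - XD₁ and I - XD₂ have spectral radius strictly less than 1. -/
/-!
If `(1 - X D) v = μ v` with `v ≠ 0`, then `D v = (1 - μ) X⁻¹ v`, so `1 - μ` is the ratio
`v* D v / v* X⁻¹ v` of two positive reals. The hypothesis `D ≺ 2 X⁻¹` bounds this ratio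
by `2`, hence `|μ| < 1`. Since `D₁ ⪯ D₂` in the Loewner order, `D₁ ≺ 2 X⁻¹` as well.
-/

open Matrix ComplexOrder

variable {ι : Type*}

theorem Matrix.PosDef.sub_diagonal_of_le {R : Type*} [Ring R] [PartialOrder R] [StarRing R]
    [StarOrderedRing R] [DecidableEq ι] {A : Matrix ι ι R} {d₁ d₂ : ι → R}
    (hA : (A - diagonal d₂).PosDef) (h : d₁ ≤ d₂) : (A - diagonal d₁).PosDef := by
  have hsplit : A - diagonal d₁ = (A - diagonal d₂) + diagonal (d₂ - d₁) := by
    rw [Pi.sub_def, ← diagonal_sub]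
    abel
  rw [hsplit]
  exact hA.add_posSemidef (.diagonal (sub_nonneg.mpr h))

variable [Fintype ι]

theorem Matrix.PosDef.map_ofReal_s15 {A : Matrix ι ι ℝ} (hA : A.PosDef) :
    (A.map Complex.ofReal).PosDef := by
  classical
  open scoped MatrixOrder in
  obtain ⟨B, rfl⟩ := CStarAlgebra.nonneg_iff_eq_star_mul_self.mp hA.posSemidef.nonneg
  refine (PosSemidef.posDef_iff_isUnit ?_).mpr (hA.isUnit.map Complex.ofRealHom.mapMatrix)
  have hmap :
      (star B * B).map Complex.ofReal = (B.map Complex.ofReal)ᴴ * B.map Complex.ofReal := by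
    rw [← conjTranspose_map _ fun r => (Complex.conj_ofReal r).symm]
    exact map_mul Complex.ofRealHom.mapMatrix _ _
  rw [hmap]
  exact posSemidef_conjTranspose_mul_self _

theorem norm_one_sub_lt_one_of_mulVec_eq_smul_mulVec {P Q : Matrix ι ι ℂ} (hP : P.PosDef)
    (hQ : Q.PosDef) (hPQ : ((2 : ℝ) • P - Q).PosDef) {v : ι → ℂ} (hv : v ≠ 0) {c : ℂ}
    (hc : Q *ᵥ v = c • P *ᵥ v) : ‖1 - c‖ < 1 := by
  have exists_ofReal : ∀ {z : ℂ}, 0 < z → ∃ r : ℝ, 0 < r ∧ z = r := fun {z} hz =>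
    ⟨z.re, (Complex.pos_iff.mp hz).1,
      Complex.eq_re_of_ofReal_le (r := 0) (by simpa using hz.le)⟩
  obtain ⟨α, hα, ha⟩ := exists_ofReal (hQ.dotProduct_mulVec_pos hv)
  obtain ⟨β, hβ, hb⟩ := exists_ofReal (hP.dotProduct_mulVec_pos hv)
  have hαβ : α < 2 * β := by
    have := hPQ.dotProduct_mulVec_pos hv
    rwa [sub_mulVec, smul_mulVec, dotProduct_sub, dotProduct_smul, ha, hb, Complex.real_smul,
      ← Complex.ofReal_mul, ← Complex.ofReal_sub, Complex.zero_lt_real, sub_pos] at this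
  have hcβ : (1 - c) * β = β - α := by
    rw [sub_mul, one_mul, ← hb, ← smul_eq_mul, ← dotProduct_smul, ← hc, ha]
  have hlt : ‖1 - c‖ * β < 1 * β := calc
    ‖1 - c‖ * β = ‖(1 - c) * β‖ := by
      rw [norm_mul, Complex.norm_real, Real.norm_of_nonneg hβ.le]
    _ = |β - α| := by rw [hcβ, ← Complex.ofReal_sub, Complex.norm_real, Real.norm_eq_abs]
    _ < 1 * β := by rw [one_mul, abs_lt]; constructor <;> linarith
  exact lt_of_mul_lt_mul_right hlt hβ.le

theorem norm_lt_one_of_mem_spectrum_one_sub_mul [DecidableEq ι] {X D : Matrix ι ι ℝ}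
    (hX : X.PosDef) (hD : D.PosDef) (hXD : ((2 : ℝ) • X⁻¹ - D).PosDef) :
    ∀ μ ∈ spectrum ℂ ((1 - X * D).map Complex.ofReal), ‖μ‖ < 1 := by
  set φ := (Algebra.ofId ℝ ℂ).mapMatrix (m := ι)
  have hφ : ∀ {M}, M.PosDef → (φ M).PosDef := fun hM => hM.map_ofReal_s15
  intro μ hμ
  rw [← spectrum_toLin', ← Module.End.hasEigenvalue_iff_mem_spectrum] at hμ
  obtain ⟨v, hvμ, hv⟩ := hμ.exists_hasEigenvector
  rw [Module.End.mem_eigenspace_iff, toLin'_apply] at hvμ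
  change φ (1 - X * D) *ᵥ v = μ • v at hvμ
  rw [map_sub, map_one, map_mul, sub_mulVec, one_mulVec] at hvμ
  have hXDv : φ X *ᵥ (φ D *ᵥ v) = (1 - μ) • v := by
    rw [sub_smul, one_smul, ← hvμ, mulVec_mulVec]
    abel
  have hDv : φ D *ᵥ v = (1 - μ) • φ X⁻¹ *ᵥ v := by
    rw [← mulVec_smul, ← hXDv, mulVec_mulVec, ← map_mul,
      nonsing_inv_mul _ hX.det_pos.ne'.isUnit, map_one, one_mulVec]
  have h2XD : ((2 : ℝ) • φ X⁻¹ - φ D).PosDef := by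
    rw [← map_smul, ← map_sub]
    exact hφ hXD
  simpa using norm_one_sub_lt_one_of_mulVec_eq_smul_mulVec (hφ hX.inv) (hφ hD) h2XD hv hDv

/-- If `X` is symmetric positive definite and `D₁, D₂` are diagonal
with `0 < (D₁)ᵢᵢ ≤ (D₂)ᵢᵢ` entrywise and `D₂ ≺ 2 X⁻¹`, then both `I - X D₁` and
`I - X D₂` have spectral radius strictly less than 1. -/
theorem stmt15 {n : ℕ} (X : Matrix (Fin n) (Fin n) ℝ) (hX : X.PosDef)
    (d₁ d₂ : Fin n → ℝ)
    (h1pos : ∀ i, 0 < d₁ i) (h12 : ∀ i, d₁ i ≤ d₂ i)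
    (h2lt : ((2 : ℝ) • X⁻¹ - Matrix.diagonal d₂).PosDef) :
    (∀ μ ∈ spectrum ℂ ((1 - X * Matrix.diagonal d₁).map Complex.ofReal), ‖μ‖ < 1) ∧
      (∀ μ ∈ spectrum ℂ ((1 - X * Matrix.diagonal d₂).map Complex.ofReal), ‖μ‖ < 1) := by
  have hD₁ : (diagonal d₁).PosDef := .diagonal h1pos
  have hD₂ : (diagonal d₂).PosDef := .diagonal fun i => (h1pos i).trans_le (h12 i)
  exact ⟨norm_lt_one_of_mem_spectrum_one_sub_mul hX hD₁ (h2lt.sub_diagonal_of_le h12),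
    norm_lt_one_of_mem_spectrum_one_sub_mul hX hD₂ h2lt⟩
end
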